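/- Let λ ∈ ℂ be a Cremer number with |λ| = 1. Then there exists a holomorphic function a(z) on the unit disk with a(0) = 0 such that the skew-product F(z,w) = (λz, w + a(z) + w²) admits no holomorphic invariant curve of the form {w = φ(z)} through a neighborhood of z = 0: the unique formal power series solution of φ(λz) = φ(z) + a(z) + φ(z)² with φ(0) = 0 diverges. -/

import Mathlib

/-- `ω(m) = min_{2 ≤ k ≤ m} |λ^k - λ|`. -/
noncomputable def brjunoOmega (l : ℂ) (m : ℕ) : ℝ :=
  sInf ((fun k : ℕ => ‖l ^ k - l‖) '' Set.Icc 2 m)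

/-!
Write `φ = ∑ φₙ zⁿ`. Comparing coefficients in `φ(λz) = φ(z) + a(z) + φ(z)²` gives
`(λⁿ - 1) φₙ = aₙ + cₙ`, where `cₙ` only involves `φ₁, …, φₙ₋₁`. So the formal solution is unique
once `λ` is not a root of unity, and choosing `aₙ ∈ {0, 1}` with `|aₙ + cₙ| ≥ 1/2` forces
`|φₙ| ≥ 1 / (2 |λⁿ - 1|)`. For a Cremer number `|λⁿ - 1|` beats every geometric sequence along a
subsequence, so `∑ φₙ zⁿ` diverges for every `z ≠ 0`. An invariant curve would be the graph of a
holomorphic `φ`, whose Taylor series is a convergent formal solution.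
-/

open Filter Topology PowerSeries

namespace PowerSeries

theorem eq_of_rescale_eq_add_sq {R : Type*} [CommRing R] [NoZeroDivisors R] {l : R}
    (hl : ∀ n ≠ 0, l ^ n ≠ 1) {a φ ψ : R⟦X⟧}
    (hφ0 : constantCoeff φ = 0) (hψ0 : constantCoeff ψ = 0)
    (hφ : rescale l φ = φ + a + φ ^ 2) (hψ : rescale l ψ = ψ + a + ψ ^ 2) : φ = ψ := by
  have hδ : rescale l (φ - ψ) - (φ - ψ) = (φ - ψ) * (φ + ψ) := by
    rw [map_sub, hφ, hψ]; ring
  have hX : X ∣ φ + ψ := X_dvd_iff.mpr (by simp [hφ0, hψ0])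
  -- Once `X ^ m ∣ φ - ψ`, coefficient `m` of `hδ` reads `(l ^ m - 1) * coeff m (φ - ψ) = 0`.
  have hXpow : ∀ n, X ^ n ∣ φ - ψ := by
    intro n
    induction n with
    | zero => simp
    | succ n ih =>
      refine X_pow_dvd_iff.mpr fun m hm => ?_
      rcases Nat.lt_succ_iff_lt_or_eq.mp hm with hm | rfl
      · exact X_pow_dvd_iff.mp ih m hm
      · rcases eq_or_ne m 0 with rfl | hm0
        · simp [hφ0, hψ0]
        have hcoeff := congrArg (coeff m) hδ
        rw [map_sub, coeff_rescale] at hcoeff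
        have hdvd : X ^ (m + 1) ∣ (φ - ψ) * (φ + ψ) := pow_succ (X : R⟦X⟧) m ▸ mul_dvd_mul ih hX
        have hrhs : coeff m ((φ - ψ) * (φ + ψ)) = 0 := X_pow_dvd_iff.mp hdvd m (by omega)
        rw [hrhs, ← sub_one_mul, mul_eq_zero] at hcoeff
        exact hcoeff.resolve_left (sub_ne_zero.mpr (hl m hm0))
  refine sub_eq_zero.mp (ext fun n => ?_)
  simpa using X_pow_dvd_iff.mp (hXpow (n + 1)) n n.lt_succ_self

open Finset in
theorem hasSum_coeff_mul_mul_pow {R : Type*} [NormedCommRing R] [CompleteSpace R]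
    {f g : R⟦X⟧} {z x y : R}
    (hf : HasSum (fun n => coeff n f * z ^ n) x) (hf' : Summable fun n => ‖coeff n f * z ^ n‖)
    (hg : HasSum (fun n => coeff n g * z ^ n) y) (hg' : Summable fun n => ‖coeff n g * z ^ n‖) :
    HasSum (fun n => coeff n (f * g) * z ^ n) (x * y) := by
  have hcauchy : ∀ n, coeff n (f * g) * z ^ n =
      ∑ kl ∈ antidiagonal n, (coeff kl.1 f * z ^ kl.1) * (coeff kl.2 g * z ^ kl.2) := by
    intro n
    rw [coeff_mul, sum_mul]
    refine sum_congr rfl fun kl hkl => ?_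
    rw [← mem_antidiagonal.mp hkl, pow_add]
    ring
  simp_rw [hcauchy, ← hf.tsum_eq, ← hg.tsum_eq,
    tsum_mul_tsum_eq_tsum_sum_antidiagonal_of_summable_norm hf' hg']
  exact (summable_norm_sum_mul_antidiagonal_of_summable_norm hf' hg').of_norm.hasSum

theorem eq_zero_of_eventually_hasSum_zero {𝕜 : Type*} [NontriviallyNormedField 𝕜] {ψ : 𝕜⟦X⟧}
    (h : ∀ᶠ z in 𝓝 0, HasSum (fun n => coeff n ψ * z ^ n) 0) : ψ = 0 := by
  have hp : HasFPowerSeriesAt 0 (FormalMultilinearSeries.ofScalars 𝕜 (coeff · ψ)) 0 := by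
    refine hasFPowerSeriesAt_iff.mpr (h.mono fun z hz => ?_)
    simpa [FormalMultilinearSeries.coeff_ofScalars, mul_comm] using hz
  ext n
  exact congrFun ((FormalMultilinearSeries.ofScalars_series_eq_zero (E := 𝕜)).mp hp.eq_zero) n

end PowerSeries

theorem HasFPowerSeriesAt.eventually_hasSum_coeff_mul_pow {𝕜 : Type*} [NontriviallyNormedField 𝕜]
    {f : 𝕜 → 𝕜} {p : FormalMultilinearSeries 𝕜 𝕜 𝕜} (hp : HasFPowerSeriesAt f p 0) :
    ∀ᶠ z in 𝓝 0, HasSum (fun n => p.coeff n * z ^ n) (f z) ∧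
      Summable fun n => ‖p.coeff n * z ^ n‖ := by
  obtain ⟨r, hr⟩ := hp
  filter_upwards [Metric.eball_mem_nhds 0 hr.r_pos] with z hz
  have hsum := hr.hasSum hz
  have hnorm := p.summable_norm_apply (Metric.eball_subset_eball hr.r_le hz)
  simp only [FormalMultilinearSeries.apply_eq_pow_smul_coeff, smul_eq_mul, zero_add] at hsum hnorm
  simp only [mul_comm (p.coeff _)]
  exact ⟨hsum, hnorm⟩

theorem exists_formal_solution_of_analyticAt {𝕜 : Type*} [NontriviallyNormedField 𝕜]
    [CompleteSpace 𝕜] {l : 𝕜} {a : ℕ → 𝕜} {φ : 𝕜 → 𝕜}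
    (ha : ∀ᶠ z in 𝓝 0, Summable fun n => ‖a n * z ^ n‖) (hφ : AnalyticAt 𝕜 φ 0)
    (hφ0 : φ 0 = 0)
    (heq : ∀ᶠ z in 𝓝 0, φ (l * z) = φ z + (∑' n, a n * z ^ n) + φ z ^ 2) :
    ∃ ψ : 𝕜⟦X⟧, constantCoeff ψ = 0 ∧ rescale l ψ = ψ + mk a + ψ ^ 2 ∧
      ∀ᶠ z in 𝓝 0, Summable fun n => coeff n ψ * z ^ n := by
  obtain ⟨p, hp⟩ := hφ
  set ψ : 𝕜⟦X⟧ := mk p.coeff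
  have hψ : ∀ᶠ z in 𝓝 0, HasSum (fun n => coeff n ψ * z ^ n) (φ z) ∧
      Summable fun n => ‖coeff n ψ * z ^ n‖ := by
    simpa only [ψ, coeff_mk] using hp.eventually_hasSum_coeff_mul_pow
  have hψl : ∀ᶠ z in 𝓝 0, HasSum (fun n => coeff n (rescale l ψ) * z ^ n) (φ (l * z)) := by
    have hlz : Tendsto (fun z : 𝕜 => l * z) (𝓝 0) (𝓝 0) := by
      simpa using (tendsto_id (x := 𝓝 (0 : 𝕜))).const_mul l
    filter_upwards [hlz.eventually hψ] with z hz
    convert hz.1 using 2 with n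
    rw [coeff_rescale, mul_pow]
    ring
  have hsol : rescale l ψ - ψ - mk a - ψ ^ 2 = 0 := by
    refine eq_zero_of_eventually_hasSum_zero ?_
    filter_upwards [hψ, hψl, ha, heq] with z hz hzl hza hzeq
    have hsq := hasSum_coeff_mul_mul_pow hz.1 hz.2 hz.1 hz.2
    have hsum := ((hzl.sub hz.1).sub hza.of_norm.hasSum).sub hsq
    rw [hzeq, show ∀ x y u : 𝕜, x + y + u ^ 2 - x - y - u * u = 0 by intros; ring] at hsum
    simpa only [map_sub, coeff_mk, sub_mul, sq] using hsum
  refine ⟨ψ, ?_, ?_, hψ.mono fun z hz => hz.2.of_norm⟩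
  · simpa [ψ, hφ0] using hp.coeff_zero
  · linear_combination hsol

noncomputable def cremerDigit {R : Type*} [SeminormedRing R] (c : R) : R :=
  if ‖1 + c‖ < 2⁻¹ then 0 else 1

section Digit

variable {R : Type*} [SeminormedRing R] [NormOneClass R]

theorem norm_cremerDigit_le_one (c : R) : ‖cremerDigit c‖ ≤ 1 := by
  unfold cremerDigit
  split_ifs <;> simp

theorem inv_two_le_norm_cremerDigit_add (c : R) : 2⁻¹ ≤ ‖cremerDigit c + c‖ := by
  unfold cremerDigit
  split_ifs with h
  · have := norm_sub_norm_le (1 : R) (1 + c)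
    rw [norm_one, sub_add_cancel_left, norm_neg] at this
    rw [zero_add]
    linarith
  · exact not_lt.mp h

end Digit

section CremerSeries

variable {𝕜 : Type*} [NormedField 𝕜]

/- `(λⁿ - 1) φₙ = aₙ + ∑_{i + j = n} φᵢ φⱼ` with `aₙ = cremerDigit` of the sum; the `Fin n` sum is
that convolution without its two end terms `φ₀ φₙ = 0`, which keeps the recursion well-founded. -/
noncomputable def cremerPhi (l : 𝕜) : ℕ → 𝕜
  | 0 => 0
  | n + 1 =>
    let c := ∑ i : Fin n, cremerPhi l (i + 1) * cremerPhi l (n - i)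
    (cremerDigit c + c) / (l ^ (n + 1) - 1)
decreasing_by all_goals omega

theorem cremerPhi_zero (l : 𝕜) : cremerPhi l 0 = 0 := by
  rw [cremerPhi]

noncomputable def cremerSeries (l : 𝕜) : 𝕜⟦X⟧ := mk (cremerPhi l)

theorem constantCoeff_cremerSeries (l : 𝕜) : constantCoeff (cremerSeries l) = 0 := by
  simp [cremerSeries, cremerPhi_zero]

theorem coeff_succ_cremerSeries_sq (l : 𝕜) (n : ℕ) :
    coeff (n + 1) (cremerSeries l ^ 2) =
      ∑ i : Fin n, cremerPhi l (i + 1) * cremerPhi l (n - i) := by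
  rw [sq, coeff_mul, Finset.Nat.sum_antidiagonal_eq_sum_range_succ_mk, Finset.sum_range_succ',
    Finset.sum_range_succ,
    Fin.sum_univ_eq_sum_range (fun i => cremerPhi l (i + 1) * cremerPhi l (n - i))]
  simp only [cremerSeries, coeff_mk, Nat.add_sub_add_right, Nat.sub_self, cremerPhi_zero, mul_zero,
    zero_mul, add_zero]

noncomputable def cremerA (l : 𝕜) : ℕ → 𝕜
  | 0 => 0
  | n + 1 => cremerDigit (coeff (n + 1) (cremerSeries l ^ 2))

theorem cremerPhi_succ (l : 𝕜) (n : ℕ) :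
    cremerPhi l (n + 1) =
      (cremerA l (n + 1) + coeff (n + 1) (cremerSeries l ^ 2)) / (l ^ (n + 1) - 1) := by
  rw [cremerPhi, cremerA, coeff_succ_cremerSeries_sq]

theorem norm_cremerA_le_one (l : 𝕜) (n : ℕ) : ‖cremerA l n‖ ≤ 1 := by
  cases n with
  | zero => simp [cremerA]
  | succ n => exact norm_cremerDigit_le_one _

theorem rescale_cremerSeries {l : 𝕜} (hl : ∀ n ≠ 0, l ^ n ≠ 1) :
    rescale l (cremerSeries l) = cremerSeries l + mk (cremerA l) + cremerSeries l ^ 2 := by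
  ext n
  cases n with
  | zero => simp [coeff_zero_eq_constantCoeff_apply, constantCoeff_cremerSeries, cremerA]
  | succ n =>
    have hden : l ^ (n + 1) - 1 ≠ 0 := sub_ne_zero.mpr (hl _ n.succ_ne_zero)
    simp only [coeff_rescale, map_add, coeff_mk, cremerSeries]
    rw [← cremerSeries, cremerPhi_succ]
    field_simp
    ring

theorem inv_two_div_le_norm_cremerPhi_succ (l : 𝕜) (n : ℕ) :
    2⁻¹ / ‖l ^ (n + 1) - 1‖ ≤ ‖cremerPhi l (n + 1)‖ := by
  rw [cremerPhi_succ, norm_div]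
  gcongr
  exact inv_two_le_norm_cremerDigit_add _

end CremerSeries

theorem not_summable_cremerPhi_mul_pow {𝕜 : Type*} [NormedField 𝕜] {l : 𝕜}
    (hl : ∀ n ≠ 0, l ^ n ≠ 1)
    (hsd : ∀ ε > 0, ∀ ρ > 0, ∃ n, ‖l ^ (n + 1) - 1‖ < ε * ρ ^ (n + 1)) {z : 𝕜} (hz : z ≠ 0) :
    ¬ Summable fun n => cremerPhi l n * z ^ n := by
  intro hs
  obtain ⟨C, hC⟩ := hs.tendsto_atTop_zero.norm.bddAbove_range
  set C' := max C 1
  have hC' : 0 < C' := lt_max_of_lt_right one_pos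
  obtain ⟨n, hn⟩ := hsd (2 * C')⁻¹ (by positivity) ‖z‖ (norm_pos_iff.mpr hz)
  set d := ‖l ^ (n + 1) - 1‖
  set w := ‖z‖ ^ (n + 1)
  have hd : 0 < d := norm_pos_iff.mpr (sub_ne_zero.mpr (hl _ n.succ_ne_zero))
  have hbig : C' < 2⁻¹ / d * w := by
    rw [div_mul_eq_mul_div, lt_div_iff₀ hd]
    calc C' * d < C' * ((2 * C')⁻¹ * w) := by gcongr
      _ = 2⁻¹ * w := by field_simp
  have hle : ‖cremerPhi l (n + 1) * z ^ (n + 1)‖ ≤ C := hC ⟨n + 1, rfl⟩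
  rw [norm_mul, norm_pow] at hle
  have hlow := mul_le_mul_of_nonneg_right (inv_two_div_le_norm_cremerPhi_succ l n)
    (by positivity : 0 ≤ w)
  linarith [le_max_left C 1]

theorem brjunoOmega_nonneg (l : ℂ) (m : ℕ) : 0 ≤ brjunoOmega l m :=
  Real.sInf_nonneg (by rintro _ ⟨k, -, rfl⟩; positivity)

section Brjuno

variable {l : ℂ}

theorem brjunoOmega_le {k m : ℕ} (hk : 2 ≤ k) (hkm : k ≤ m) : brjunoOmega l m ≤ ‖l ^ k - l‖ :=
  csInf_le ((Set.finite_Icc 2 m).image _).bddBelow ⟨k, ⟨hk, hkm⟩, rfl⟩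

theorem exists_norm_pow_succ_sub_one_eq_brjunoOmega (habs : ‖l‖ = 1) {m : ℕ} (hm : 2 ≤ m) :
    ∃ n, n + 2 ≤ m ∧ ‖l ^ (n + 1) - 1‖ = brjunoOmega l m := by
  obtain ⟨k, ⟨hk, hkm⟩, hωk⟩ := ((Set.nonempty_Icc.mpr hm).image fun k : ℕ => ‖l ^ k - l‖).csInf_mem
    ((Set.finite_Icc 2 m).image _)
  obtain ⟨n, rfl⟩ : ∃ n, k = n + 2 := ⟨k - 2, by omega⟩
  refine ⟨n, hkm, ?_⟩
  dsimp only at hωk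
  rw [brjunoOmega, ← hωk, pow_succ' l (n + 1), ← mul_sub_one, norm_mul, habs, one_mul]

variable (hC : Filter.limsup
    (fun m : ℕ => (((1 / m : ℝ) * Real.log (1 / brjunoOmega l m) : ℝ) : EReal)) atTop = ⊤)
include hC

theorem frequently_brjunoOmega_lt_pow {r : ℝ} (hr0 : 0 < r) (hr1 : r ≤ 1) :
    ∃ᶠ m in atTop, 0 < brjunoOmega l m ∧ brjunoOmega l m < r ^ m := by
  have hfreq := frequently_lt_of_lt_limsup (by isBoundedDefault)
    (hC ▸ EReal.coe_lt_top (-Real.log r))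
  refine (hfreq.and_eventually (eventually_gt_atTop 0)).mono fun m ⟨hm, hm0⟩ => ?_
  have hm0' : (0 : ℝ) < m := Nat.cast_pos.mpr hm0
  rw [EReal.coe_lt_coe_iff, one_div_mul_eq_div, lt_div_iff₀ hm0', one_div, Real.log_inv] at hm
  have hlogr : Real.log r ≤ 0 := Real.log_nonpos hr0.le hr1
  have hω : 0 < brjunoOmega l m := by
    refine (brjunoOmega_nonneg l m).lt_of_ne fun h => ?_
    rw [← h, Real.log_zero] at hm
    nlinarith
  refine ⟨hω, (Real.log_lt_log_iff hω (by positivity)).mp ?_⟩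
  rw [Real.log_pow]
  linarith

theorem pow_ne_one_of_limsup_eq_top {n : ℕ} (hn : n ≠ 0) : l ^ n ≠ 1 := by
  intro h
  obtain ⟨m, ⟨hω, -⟩, hm⟩ :=
    ((frequently_brjunoOmega_lt_pow hC one_pos le_rfl).and_eventually
      (eventually_ge_atTop (n + 1))).exists
  have := brjunoOmega_le (l := l) (by omega : 2 ≤ n + 1) hm
  rw [pow_succ, h, one_mul, sub_self, norm_zero] at this
  linarith

theorem exists_norm_pow_succ_sub_one_lt (habs : ‖l‖ = 1) {ε ρ : ℝ} (hε : 0 < ε) (hρ : 0 < ρ) :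
    ∃ n, ‖l ^ (n + 1) - 1‖ < ε * ρ ^ (n + 1) := by
  set r := min 1 (min ε ρ)
  have hr0 : 0 < r := lt_min one_pos (lt_min hε hρ)
  have hr1 : r ≤ 1 := min_le_left _ _
  obtain ⟨m, ⟨-, hωm⟩, hm⟩ :=
    ((frequently_brjunoOmega_lt_pow hC hr0 hr1).and_eventually (eventually_ge_atTop 2)).exists
  obtain ⟨n, hnm, hn⟩ := exists_norm_pow_succ_sub_one_eq_brjunoOmega habs hm
  refine ⟨n, ?_⟩
  calc ‖l ^ (n + 1) - 1‖ = brjunoOmega l m := hn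
    _ < r ^ m := hωm
    _ ≤ r ^ (n + 2) := pow_le_pow_of_le_one hr0.le hr1 hnm
    _ = r * r ^ (n + 1) := pow_succ' r (n + 1)
    _ ≤ ε * ρ ^ (n + 1) := by
      gcongr
      · exact (min_le_right _ _).trans (min_le_left _ _)
      · exact (min_le_right _ _).trans (min_le_right _ _)

end Brjuno

theorem summable_norm_mul_pow_of_norm_le_one {𝕜 : Type*} [NormedField 𝕜] {a : ℕ → 𝕜}
    (ha : ∀ n, ‖a n‖ ≤ 1) {z : 𝕜} (hz : ‖z‖ < 1) : Summable fun n => ‖a n * z ^ n‖ :=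
  (summable_geometric_of_lt_one (norm_nonneg z) hz).of_nonneg_of_le (fun _ => norm_nonneg _)
    fun n => by
      rw [norm_mul, norm_pow]
      exact mul_le_of_le_one_left (by positivity) (ha n)

/-- for a Cremer number `λ` there is a holomorphic function
`a(z) = Σ ac_n z^n` on the unit disk with `a(0) = 0` such that
`F(z,w) = (λz, w + a(z) + w²)` admits no holomorphic invariant curve `{w = φ(z)}`
near `z = 0`: the unique formal solution of `φ(λz) = φ(z) + a(z) + φ(z)²` with
`φ(0) = 0` diverges. -/
theorem cremer_skew_product_without_invariant_curve
    (l : ℂ) (habs : ‖l‖ = 1)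
    (hC : Filter.limsup
        (fun m : ℕ => (((1 / m : ℝ) * Real.log (1 / brjunoOmega l m) : ℝ) : EReal))
        Filter.atTop = ⊤) :
    ∃ ac : ℕ → ℂ, ac 0 = 0 ∧
      (∀ z ∈ Metric.ball (0 : ℂ) 1, Summable fun n : ℕ => ac n * z ^ n) ∧
      (∀ φ : PowerSeries ℂ, PowerSeries.constantCoeff φ = 0 →
        PowerSeries.rescale l φ = φ + PowerSeries.mk ac + φ ^ 2 →
        ∀ z : ℂ, z ≠ 0 → ¬ Summable (fun n : ℕ => PowerSeries.coeff n φ * z ^ n)) ∧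
      ¬ ∃ r > 0, ∃ φf : ℂ → ℂ, DifferentiableOn ℂ φf (Metric.ball 0 r) ∧ φf 0 = 0 ∧
        ∀ z ∈ Metric.ball (0 : ℂ) r,
          φf (l * z) = φf z + (∑' n : ℕ, ac n * z ^ n) + φf z ^ 2 := by
  have hl : ∀ n ≠ 0, l ^ n ≠ 1 := fun n hn => pow_ne_one_of_limsup_eq_top hC hn
  have ha : ∀ z ∈ Metric.ball (0 : ℂ) 1, Summable fun n => ‖cremerA l n * z ^ n‖ := fun z hz =>
    summable_norm_mul_pow_of_norm_le_one (norm_cremerA_le_one l) (mem_ball_zero_iff.mp hz)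
  have hdiv : ∀ φ : ℂ⟦X⟧, constantCoeff φ = 0 → rescale l φ = φ + mk (cremerA l) + φ ^ 2 →
      ∀ z : ℂ, z ≠ 0 → ¬ Summable fun n => coeff n φ * z ^ n := by
    intro φ hφ0 hφ z hz
    rw [eq_of_rescale_eq_add_sq hl hφ0 (constantCoeff_cremerSeries l) hφ (rescale_cremerSeries hl)]
    simpa only [cremerSeries, coeff_mk] using not_summable_cremerPhi_mul_pow hl
      (fun ε hε ρ hρ => exists_norm_pow_succ_sub_one_lt hC habs hε hρ) hz
  refine ⟨cremerA l, rfl, fun z hz => (ha z hz).of_norm, hdiv, ?_⟩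
  rintro ⟨r, hr, φ, hφ, hφ0, heq⟩
  obtain ⟨ψ, hψ0, hψ, hconv⟩ := exists_formal_solution_of_analyticAt
    (eventually_of_mem (Metric.ball_mem_nhds 0 one_pos) ha)
    (hφ.analyticAt (Metric.ball_mem_nhds 0 hr)) hφ0
    (eventually_of_mem (Metric.ball_mem_nhds 0 hr) heq)
  obtain ⟨z, hz, hz0⟩ :=
    ((hconv.filter_mono nhdsWithin_le_nhds).and (self_mem_nhdsWithin (s := {0}ᶜ))).exists
  exact hdiv ψ hψ0 hψ z hz0 hz
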